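/- Under assumptions (A1)-(A3), the set of solutions to the dual problem sup_{λ ∈ ℝ^m × ℝ_+^ℓ} d(λ) is non-empty, coincides with the subdifferential ∂V(0), and every dual optimizer λ* satisfies the a priori bound ‖λ*‖_1 = Σ_i |λ*_i| ≤ 2M/ε. -/

import Mathlib

/-!
The value function `V` is bounded below by `-M`, and by the qualification condition it is
bounded above by `M` on the `ε`-ball. Mixing measures shows that its epigraph is convex, so
`(0, V 0)` is a boundary point of a convex set with `(0, M + 1)` in its interior, and a
supporting hyperplane there cannot be vertical: its slope is a subgradient `λ₀ ∈ ∂V(0)`.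
A subgradient is dual feasible (relaxing an inequality constraint can only lower `V`) and
satisfies `V 0 ≤ d λ` (test `z = -E^P[ζ]`), while weak duality gives `d ≤ V 0`; hence `∂V(0)`
is exactly the set of dual maximisers. Testing the subgradient inequality at
`z_i = ε sign λ_i` gives `ε ‖λ‖₁ ≤ V z - V 0 ≤ 2M`.
-/

open MeasureTheory Set

theorem Convex.exists_nonvertical_supporting_hyperplane {E : Type*} [TopologicalSpace E]
    [AddCommGroup E] [Module ℝ E] [IsTopologicalAddGroup E] [ContinuousSMul ℝ E]
    {A : Set (E × ℝ)} (hA : Convex ℝ A) {x₀ : E} {v₀ T : ℝ} (hT : v₀ < T)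
    (hint : (x₀, T) ∈ interior A) (hbd : (x₀, v₀) ∉ interior A) :
    ∃ φ : StrongDual ℝ E, ∀ p ∈ A, v₀ + φ (p.1 - x₀) ≤ p.2 := by
  obtain ⟨f, hf0, hfA⟩ := geometric_hahn_banach_of_nonempty_interior_point hA hbd ⟨_, hint⟩
  -- Strictness at the interior point `(x₀, T)` is what rules out a vertical hyperplane.
  have hlt : f (x₀, T) < f (x₀, v₀) := by
    have : f '' interior A ⊆ interior (Iic (f (x₀, v₀))) :=
      interior_maximal (image_subset_iff.2 fun p hp => hfA p (interior_subset hp))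
        (f.isOpenMap_of_ne_zero hf0 _ isOpen_interior)
    simpa using this (mem_image_of_mem f hint)
  set c := f (0, 1)
  have hsplit : ∀ z t, f (z, t) = f (z, 0) + t * c := fun z t => by
    rw [← smul_eq_mul, ← map_smul, ← map_add]; simp
  have hc : c < 0 := by
    rw [hsplit x₀ T, hsplit x₀ v₀] at hlt
    nlinarith
  refine ⟨(-c)⁻¹ • f.comp (ContinuousLinearMap.inl ℝ E ℝ), fun p hp => ?_⟩
  have hfp := hfA p hp
  rw [hsplit p.1 p.2, hsplit x₀ v₀] at hfp
  have hφ : f (p.1 - x₀, 0) = f (p.1, 0) - f (x₀, 0) := by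
    rw [← map_sub]; simp
  simp only [smul_apply, ContinuousLinearMap.comp_apply,
    ContinuousLinearMap.inl_apply, smul_eq_mul, hφ]
  rw [← le_sub_iff_add_le', inv_mul_le_iff₀ (neg_pos.2 hc)]
  linarith

def IsSubgradientAtZero {n : ℕ} (V : (Fin n → ℝ) → EReal) (lam : Fin n → ℝ) : Prop :=
  ∀ z, V 0 + ((∑ i, lam i * z i : ℝ) : EReal) ≤ V z

theorem IsSubgradientAtZero.sum_abs_le {n : ℕ} {V : (Fin n → ℝ) → EReal} {lam : Fin n → ℝ}
    (h : IsSubgradientAtZero V lam) {ε M v₀ : ℝ} (hε : 0 < ε) (hv₀ : V 0 = v₀) (hlow : -M ≤ v₀)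
    (hup : ∀ z, ‖z‖ ≤ ε → V z ≤ M) :
    ∑ i, |lam i| ≤ 2 * M / ε := by
  set z : Fin n → ℝ := fun i => if 0 ≤ lam i then ε else -ε
  have hz : ‖z‖ ≤ ε := (pi_norm_le_iff_of_nonneg hε.le).2 fun i => by
    simp only [z]; split_ifs <;> simp [abs_of_pos hε]
  have hsum : ∑ i, lam i * z i = ε * ∑ i, |lam i| := by
    rw [Finset.mul_sum]
    refine Finset.sum_congr rfl fun i _ => ?_
    simp only [z]
    split_ifs with hi
    · rw [abs_of_nonneg hi]; ring
    · rw [abs_of_neg (not_le.1 hi)]; ring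
  have hle := (h z).trans (hup z hz)
  rw [hv₀, hsum, ← EReal.coe_add, EReal.coe_le_coe_iff] at hle
  rw [le_div_iff₀ hε]
  linarith

theorem integral_mixture {Ω : Type*} [MeasurableSpace Ω] {P Q : Measure Ω} {f : Ω → ℝ}
    (hP : Integrable f P) (hQ : Integrable f Q) {a : ℝ} (ha₀ : 0 ≤ a) (ha₁ : a ≤ 1) :
    ∫ ω, f ω ∂(ENNReal.ofReal a • P + ENNReal.ofReal (1 - a) • Q)
      = a * ∫ ω, f ω ∂P + (1 - a) * ∫ ω, f ω ∂Q := by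
  rw [integral_add_measure (hP.smul_measure ENNReal.ofReal_ne_top)
    (hQ.smul_measure ENNReal.ofReal_ne_top), integral_smul_measure, integral_smul_measure,
    ENNReal.toReal_ofReal ha₀, ENNReal.toReal_ofReal (sub_nonneg.2 ha₁), smul_eq_mul, smul_eq_mul]

section Duality

variable {Ω : Type*} [MeasurableSpace Ω] {n : ℕ} (m : ℕ) (Pc : Set (Measure Ω))
  (ξ : Ω → ℝ) (ζ : Fin n → Ω → ℝ)

def IsFeasible (z : Fin n → ℝ) (P : Measure Ω) : Prop :=
  ∀ i : Fin n, ((i : ℕ) < m → (∫ ω, ζ i ω ∂P) + z i = 0) ∧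
    (m ≤ (i : ℕ) → (∫ ω, ζ i ω ∂P) + z i ≤ 0)

def IsDualFeasible (lam : Fin n → ℝ) : Prop :=
  ∀ i : Fin n, m ≤ (i : ℕ) → 0 ≤ lam i

noncomputable def primalValue (z : Fin n → ℝ) : EReal :=
  sInf ((fun P => ((∫ ω, ξ ω ∂P : ℝ) : EReal)) '' {P | P ∈ Pc ∧ IsFeasible m ζ z P})

noncomputable def dualFunction (lam : Fin n → ℝ) : EReal :=
  sInf ((fun P => (((∫ ω, ξ ω ∂P) + ∑ i, lam i * (∫ ω, ζ i ω ∂P) : ℝ) : EReal)) '' Pc)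

/-- Sandwiched between the strict epigraph and the epigraph of `primalValue`; unlike those, its
convexity follows directly from mixing measures. -/
def primalEpigraph : Set ((Fin n → ℝ) × ℝ) :=
  {p | ∃ P ∈ Pc, IsFeasible m ζ p.1 P ∧ ∫ ω, ξ ω ∂P ≤ p.2}

variable {m Pc ξ ζ}

theorem IsFeasible.mixture {z z' : Fin n → ℝ} {P Q : Measure Ω} (hP : IsFeasible m ζ z P)
    (hQ : IsFeasible m ζ z' Q) (hPζ : ∀ i, Integrable (ζ i) P) (hQζ : ∀ i, Integrable (ζ i) Q)
    {a : ℝ} (ha₀ : 0 ≤ a) (ha₁ : a ≤ 1) :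
    IsFeasible m ζ (a • z + (1 - a) • z') (ENNReal.ofReal a • P + ENNReal.ofReal (1 - a) • Q) := by
  intro i
  have hmix : (∫ ω, ζ i ω ∂(ENNReal.ofReal a • P + ENNReal.ofReal (1 - a) • Q))
      + (a • z + (1 - a) • z') i
      = a * ((∫ ω, ζ i ω ∂P) + z i) + (1 - a) * ((∫ ω, ζ i ω ∂Q) + z' i) := by
    rw [integral_mixture (hPζ i) (hQζ i) ha₀ ha₁]
    simp only [Pi.add_apply, Pi.smul_apply, smul_eq_mul]
    ring
  refine ⟨fun hi => ?_, fun hi => ?_⟩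
  · rw [hmix, (hP i).1 hi, (hQ i).1 hi]; ring
  · rw [hmix]
    have := mul_nonpos_of_nonneg_of_nonpos ha₀ ((hP i).2 hi)
    have := mul_nonpos_of_nonneg_of_nonpos (sub_nonneg.2 ha₁) ((hQ i).2 hi)
    linarith

theorem convex_primalEpigraph
    (hconv : ∀ P ∈ Pc, ∀ Q ∈ Pc, ∀ θ : ℝ, 0 ≤ θ → θ ≤ 1 →
      (ENNReal.ofReal θ) • P + (ENNReal.ofReal (1 - θ)) • Q ∈ Pc)
    (hξ : ∀ P ∈ Pc, Integrable ξ P) (hζ : ∀ P ∈ Pc, ∀ i, Integrable (ζ i) P) :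
    Convex ℝ (primalEpigraph m Pc ξ ζ) := by
  rintro ⟨z, t⟩ ⟨P, hP, hPz, hPt⟩ ⟨z', t'⟩ ⟨Q, hQ, hQz, hQt⟩ a b ha hb hab
  obtain rfl : b = 1 - a := by linarith
  refine ⟨_, hconv P hP Q hQ a ha (by linarith),
    hPz.mixture hQz (hζ P hP) (hζ Q hQ) ha (by linarith), ?_⟩
  rw [integral_mixture (hξ P hP) (hξ Q hQ) ha (by linarith)]
  simp only [Prod.snd_add, Prod.smul_snd, smul_eq_mul]
  gcongr

theorem primalValue_le {z : Fin n → ℝ} {P : Measure Ω} (hP : P ∈ Pc) (hPz : IsFeasible m ζ z P) :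
    primalValue m Pc ξ ζ z ≤ ((∫ ω, ξ ω ∂P : ℝ) : EReal) :=
  sInf_le ⟨P, ⟨hP, hPz⟩, rfl⟩

theorem IsFeasible.of_le {z z' : Fin n → ℝ} {P : Measure Ω} (hP : IsFeasible m ζ z' P)
    (heq : ∀ i : Fin n, (i : ℕ) < m → z i = z' i) (hle : z ≤ z') : IsFeasible m ζ z P :=
  fun i => ⟨fun hi => heq i hi ▸ (hP i).1 hi,
    fun hi => (add_le_add_right (hle i) _).trans ((hP i).2 hi)⟩

theorem primalValue_le_primalValue {z z' : Fin n → ℝ}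
    (heq : ∀ i : Fin n, (i : ℕ) < m → z i = z' i) (hle : z ≤ z') :
    primalValue m Pc ξ ζ z ≤ primalValue m Pc ξ ζ z' :=
  sInf_le_sInf (image_mono fun _ ⟨hP, hPz⟩ => ⟨hP, hPz.of_le heq hle⟩)

theorem neg_le_primalValue {M : ℝ} (hM : ∀ P ∈ Pc, |∫ ω, ξ ω ∂P| ≤ M) (z : Fin n → ℝ) :
    ((-M : ℝ) : EReal) ≤ primalValue m Pc ξ ζ z :=
  le_sInf <| by
    rintro _ ⟨P, ⟨hP, -⟩, rfl⟩
    exact EReal.coe_le_coe_iff.2 (neg_le_of_abs_le (hM P hP))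

theorem primalValue_le_of_norm_le {M ε : ℝ} (hM : ∀ P ∈ Pc, |∫ ω, ξ ω ∂P| ≤ M)
    (hqual : ∀ z : Fin n → ℝ, ‖z‖ ≤ ε → ∃ P ∈ Pc, IsFeasible m ζ z P) {z : Fin n → ℝ}
    (hz : ‖z‖ ≤ ε) : primalValue m Pc ξ ζ z ≤ M := by
  obtain ⟨P, hP, hPz⟩ := hqual z hz
  exact (primalValue_le hP hPz).trans (EReal.coe_le_coe_iff.2 (le_of_abs_le (hM P hP)))

theorem sum_mul_integral_le {lam z : Fin n → ℝ} {P : Measure Ω} (hlam : IsDualFeasible m lam)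
    (hP : IsFeasible m ζ z P) : ∑ i, lam i * ∫ ω, ζ i ω ∂P ≤ -∑ i, lam i * z i := by
  rw [← Finset.sum_neg_distrib]
  refine Finset.sum_le_sum fun i _ => ?_
  rcases lt_or_ge (i : ℕ) m with hi | hi
  · rw [eq_neg_of_add_eq_zero_left ((hP i).1 hi), neg_mul_eq_mul_neg]
  · rw [← mul_neg]
    exact mul_le_mul_of_nonneg_left (by linarith [(hP i).2 hi]) (hlam i hi)

theorem dualFunction_le {lam : Fin n → ℝ} {P : Measure Ω} (hP : P ∈ Pc) :
    dualFunction Pc ξ ζ lam ≤ (((∫ ω, ξ ω ∂P) + ∑ i, lam i * (∫ ω, ζ i ω ∂P) : ℝ) : EReal) :=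
  sInf_le ⟨P, hP, rfl⟩

theorem dualFunction_le_primalValue_zero {lam : Fin n → ℝ} (hlam : IsDualFeasible m lam) :
    dualFunction Pc ξ ζ lam ≤ primalValue m Pc ξ ζ 0 :=
  le_sInf <| by
    rintro _ ⟨P, ⟨hP, hP₀⟩, rfl⟩
    refine (dualFunction_le hP).trans (EReal.coe_le_coe_iff.2 ?_)
    have hsum := sum_mul_integral_le hlam hP₀
    simp only [Pi.zero_apply, mul_zero, Finset.sum_const_zero, neg_zero] at hsum
    linarith

end Duality

section Subgradients

open Topology

variable {Ω : Type*} [MeasurableSpace Ω] {n m : ℕ} {Pc : Set (Measure Ω)}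
  {ξ : Ω → ℝ} {ζ : Fin n → Ω → ℝ} {lam : Fin n → ℝ} {v₀ : ℝ}

theorem IsSubgradientAtZero.isDualFeasible (h : IsSubgradientAtZero (primalValue m Pc ξ ζ) lam)
    (hv₀ : primalValue m Pc ξ ζ 0 = v₀) : IsDualFeasible m lam := by
  intro i hi
  have hrelax : primalValue m Pc ξ ζ (Pi.single i (-1)) ≤ primalValue m Pc ξ ζ 0 :=
    primalValue_le_primalValue (fun j hj => Pi.single_eq_of_ne (fun hji => by subst hji; omega) _)
      (Pi.single_nonpos.2 (by norm_num))
  have hle := (h _).trans hrelax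
  rw [hv₀, ← EReal.coe_add, EReal.coe_le_coe_iff] at hle
  simpa [Pi.single_apply] using hle

theorem IsSubgradientAtZero.primalValue_zero_le_dualFunction
    (h : IsSubgradientAtZero (primalValue m Pc ξ ζ) lam) (hv₀ : primalValue m Pc ξ ζ 0 = v₀) :
    primalValue m Pc ξ ζ 0 ≤ dualFunction Pc ξ ζ lam :=
  le_sInf <| by
    rintro _ ⟨P, hP, rfl⟩
    have hP' : IsFeasible m ζ (fun i => -∫ ω, ζ i ω ∂P) P :=
      fun i => ⟨fun _ => add_neg_cancel _, fun _ => (add_neg_cancel _).le⟩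
    have hle := (h _).trans (primalValue_le hP hP')
    rw [hv₀, ← EReal.coe_add, EReal.coe_le_coe_iff] at hle
    rw [hv₀, EReal.coe_le_coe_iff]
    simp only [mul_neg, Finset.sum_neg_distrib] at hle
    linarith

theorem isSubgradientAtZero_of_le_dualFunction (hlam : IsDualFeasible m lam)
    (hv₀ : primalValue m Pc ξ ζ 0 = v₀)
    (hdual : primalValue m Pc ξ ζ 0 ≤ dualFunction Pc ξ ζ lam) :
    IsSubgradientAtZero (primalValue m Pc ξ ζ) lam := fun z =>
  le_sInf <| by
    rintro _ ⟨P, ⟨hP, hPz⟩, rfl⟩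
    have hle := hdual.trans (dualFunction_le hP)
    rw [hv₀, EReal.coe_le_coe_iff] at hle
    rw [hv₀, ← EReal.coe_add, EReal.coe_le_coe_iff]
    linarith [sum_mul_integral_le hlam hPz]

theorem exists_isSubgradientAtZero_primalValue
    (hconv : ∀ P ∈ Pc, ∀ Q ∈ Pc, ∀ θ : ℝ, 0 ≤ θ → θ ≤ 1 →
      (ENNReal.ofReal θ) • P + (ENNReal.ofReal (1 - θ)) • Q ∈ Pc)
    (hξ : ∀ P ∈ Pc, Integrable ξ P) (hζ : ∀ P ∈ Pc, ∀ i, Integrable (ζ i) P)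
    {M ε : ℝ} (hM : ∀ P ∈ Pc, |∫ ω, ξ ω ∂P| ≤ M) (hε : 0 < ε)
    (hqual : ∀ z : Fin n → ℝ, ‖z‖ ≤ ε → ∃ P ∈ Pc, IsFeasible m ζ z P)
    (hv₀ : primalValue m Pc ξ ζ 0 = v₀) :
    ∃ lam, IsSubgradientAtZero (primalValue m Pc ξ ζ) lam := by
  have hinterior : ((0 : Fin n → ℝ), M + 1) ∈ interior (primalEpigraph m Pc ξ ζ) := by
    refine mem_interior.2 ⟨{p | ‖p.1‖ < ε ∧ M < p.2}, fun p hp => ?_,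
      (isOpen_lt continuous_fst.norm continuous_const).inter
        (isOpen_lt continuous_const continuous_snd), by simpa using hε⟩
    obtain ⟨P, hP, hPz⟩ := hqual p.1 hp.1.le
    exact ⟨P, hP, hPz, (le_of_abs_le (hM P hP)).trans hp.2.le⟩
  have hboundary : ((0 : Fin n → ℝ), v₀) ∉ interior (primalEpigraph m Pc ξ ζ) := by
    intro hmem
    have hnhds : ∀ᶠ t in 𝓝 v₀, ((0 : Fin n → ℝ), t) ∈ primalEpigraph m Pc ξ ζ :=
      (Continuous.prodMk_right 0).continuousAt.preimage_mem_nhds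
        (mem_interior_iff_mem_nhds.1 hmem)
    obtain ⟨t, ht, P, hP, hP₀, hPt⟩ := hnhds.exists_lt
    have hle := primalValue_le (ξ := ξ) hP hP₀
    rw [hv₀, EReal.coe_le_coe_iff] at hle
    linarith
  have hv₀M : v₀ < M + 1 := by
    have hle := primalValue_le_of_norm_le hM hqual (by simpa using hε.le : ‖(0 : Fin n → ℝ)‖ ≤ ε)
    rw [hv₀, EReal.coe_le_coe_iff] at hle
    linarith
  obtain ⟨φ, hφ⟩ := (convex_primalEpigraph hconv hξ hζ).exists_nonvertical_supporting_hyperplane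
    hv₀M hinterior hboundary
  refine ⟨fun i => φ fun j => if i = j then 1 else 0, fun z => le_sInf ?_⟩
  rintro _ ⟨P, ⟨hP, hPz⟩, rfl⟩
  have hφz : φ z = ∑ i, (φ fun j => if i = j then 1 else 0) * z i := by
    rw [← φ.coe_coe, LinearMap.pi_apply_eq_sum_univ]
    simp_rw [smul_eq_mul, mul_comm]
  rw [hv₀, ← EReal.coe_add, EReal.coe_le_coe_iff, ← hφz]
  simpa using hφ (z, ∫ ω, ξ ω ∂P) ⟨P, hP, hPz, le_rfl⟩

end Subgradients

theorem dual_solutions_nonempty_eq_subdiff_bounded_general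
    {Ω : Type*} [MeasurableSpace Ω] (m l : ℕ)
    (Pc : Set (Measure Ω))
    (hconv : ∀ P ∈ Pc, ∀ Q ∈ Pc, ∀ θ : ℝ, 0 ≤ θ → θ ≤ 1 →
      (ENNReal.ofReal θ) • P + (ENNReal.ofReal (1 - θ)) • Q ∈ Pc)
    (ξ : Ω → ℝ) (ζ : Fin (m + l) → Ω → ℝ)
    (hξ : ∀ P ∈ Pc, Integrable ξ P)
    (hζ : ∀ P ∈ Pc, ∀ i, Integrable (ζ i) P)
    (M : ℝ) (hM : ∀ P ∈ Pc, |∫ ω, ξ ω ∂P| ≤ M)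
    (ε : ℝ) (hε : 0 < ε)
    (hqual : ∀ z : Fin (m + l) → ℝ, ‖z‖ ≤ ε → ∃ P ∈ Pc, ∀ i : Fin (m + l),
        ((i : ℕ) < m → (∫ ω, ζ i ω ∂P) + z i = 0) ∧
        (m ≤ (i : ℕ) → (∫ ω, ζ i ω ∂P) + z i ≤ 0))
    (V : (Fin (m + l) → ℝ) → EReal)
    (hV : ∀ z, V z = sInf ((fun P => ((∫ ω, ξ ω ∂P : ℝ) : EReal)) ''
      {P | P ∈ Pc ∧ ∀ i : Fin (m + l),
        ((i : ℕ) < m → (∫ ω, ζ i ω ∂P) + z i = 0) ∧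
        (m ≤ (i : ℕ) → (∫ ω, ζ i ω ∂P) + z i ≤ 0)}))
    (d : (Fin (m + l) → ℝ) → EReal)
    (hd : ∀ lam : Fin (m + l) → ℝ,
      d lam = sInf ((fun P =>
        (((∫ ω, ξ ω ∂P) + ∑ i, lam i * (∫ ω, ζ i ω ∂P) : ℝ) : EReal)) '' Pc))
    -- the set of solutions to the dual problem `sup_{λ ∈ ℝ^m × ℝ_+^ℓ} d(λ)`
    (DualSol : Set (Fin (m + l) → ℝ))
    (hDualSol : ∀ lam, lam ∈ DualSol ↔
      ((∀ i : Fin (m + l), m ≤ (i : ℕ) → 0 ≤ lam i) ∧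
        ∀ lam' : Fin (m + l) → ℝ, (∀ i : Fin (m + l), m ≤ (i : ℕ) → 0 ≤ lam' i) →
          d lam' ≤ d lam)) :
    DualSol.Nonempty ∧
    (∀ lam : Fin (m + l) → ℝ, lam ∈ DualSol ↔
      (∀ z : Fin (m + l) → ℝ, V 0 + ((∑ i, lam i * z i : ℝ) : EReal) ≤ V z)) ∧
    (∀ lam ∈ DualSol, ∑ i, |lam i| ≤ 2 * M / ε) := by
  obtain rfl : V = primalValue m Pc ξ ζ := funext hV
  obtain rfl : d = dualFunction Pc ξ ζ := funext hd
  have hup : ∀ z, ‖z‖ ≤ ε → primalValue m Pc ξ ζ z ≤ M :=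
    fun z => primalValue_le_of_norm_le hM hqual
  have hlow := neg_le_primalValue (m := m) (ζ := ζ) hM 0
  obtain ⟨v₀, hv₀⟩ : ∃ v₀ : ℝ, primalValue m Pc ξ ζ 0 = v₀ :=
    ⟨_, (EReal.coe_toReal (ne_top_of_le_ne_top (EReal.coe_ne_top M) (hup 0 (by simpa using hε.le)))
      (ne_bot_of_le_ne_bot (EReal.coe_ne_bot _) hlow)).symm⟩
  obtain ⟨lam₀, hlam₀⟩ := exists_isSubgradientAtZero_primalValue hconv hξ hζ hM hε hqual hv₀
  have hiff : ∀ lam, lam ∈ DualSol ↔ IsSubgradientAtZero (primalValue m Pc ξ ζ) lam := by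
    refine fun lam => (hDualSol lam).trans ⟨fun ⟨hlam, hmax⟩ => ?_, fun h => ?_⟩
    · exact isSubgradientAtZero_of_le_dualFunction hlam hv₀
        ((hlam₀.primalValue_zero_le_dualFunction hv₀).trans (hmax _ (hlam₀.isDualFeasible hv₀)))
    · exact ⟨h.isDualFeasible hv₀, fun lam' hlam' =>
        (dualFunction_le_primalValue_zero hlam').trans (h.primalValue_zero_le_dualFunction hv₀)⟩
  exact ⟨⟨lam₀, (hiff lam₀).2 hlam₀⟩, hiff, fun lam hlam =>
    ((hiff lam).1 hlam).sum_abs_le hε hv₀ (by exact_mod_cast hv₀ ▸ hlow) hup⟩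

/-- under (A1)-(A3) the set of dual solutions is non-empty, coincides
with the subdifferential `∂V(0)`, and every dual optimizer `λ*` satisfies
`‖λ*‖₁ ≤ 2M/ε`. -/
theorem dual_solutions_nonempty_eq_subdiff_bounded
    {Ω : Type*} [MeasurableSpace Ω] (m l : ℕ)
    (Pc : Set (Measure Ω))
    (hprob : ∀ P ∈ Pc, IsProbabilityMeasure P)
    (hconv : ∀ P ∈ Pc, ∀ Q ∈ Pc, ∀ θ : ℝ, 0 ≤ θ → θ ≤ 1 →
      (ENNReal.ofReal θ) • P + (ENNReal.ofReal (1 - θ)) • Q ∈ Pc)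
    (ξ : Ω → ℝ) (ζ : Fin (m + l) → Ω → ℝ)
    (hξ : ∀ P ∈ Pc, Integrable ξ P)
    (hζ : ∀ P ∈ Pc, ∀ i, Integrable (ζ i) P)
    (M : ℝ) (hM : ∀ P ∈ Pc, |∫ ω, ξ ω ∂P| ≤ M)
    (ε : ℝ) (hε : 0 < ε)
    (hqual : ∀ z : Fin (m + l) → ℝ, ‖z‖ ≤ ε → ∃ P ∈ Pc, ∀ i : Fin (m + l),
        ((i : ℕ) < m → (∫ ω, ζ i ω ∂P) + z i = 0) ∧
        (m ≤ (i : ℕ) → (∫ ω, ζ i ω ∂P) + z i ≤ 0))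
    (V : (Fin (m + l) → ℝ) → EReal)
    (hV : ∀ z, V z = sInf ((fun P => ((∫ ω, ξ ω ∂P : ℝ) : EReal)) ''
      {P | P ∈ Pc ∧ ∀ i : Fin (m + l),
        ((i : ℕ) < m → (∫ ω, ζ i ω ∂P) + z i = 0) ∧
        (m ≤ (i : ℕ) → (∫ ω, ζ i ω ∂P) + z i ≤ 0)}))
    (d : (Fin (m + l) → ℝ) → EReal)
    (hd : ∀ lam : Fin (m + l) → ℝ,
      d lam = sInf ((fun P =>
        (((∫ ω, ξ ω ∂P) + ∑ i, lam i * (∫ ω, ζ i ω ∂P) : ℝ) : EReal)) '' Pc))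
    -- the set of solutions to the dual problem `sup_{λ ∈ ℝ^m × ℝ_+^ℓ} d(λ)`
    (DualSol : Set (Fin (m + l) → ℝ))
    (hDualSol : ∀ lam, lam ∈ DualSol ↔
      ((∀ i : Fin (m + l), m ≤ (i : ℕ) → 0 ≤ lam i) ∧
        ∀ lam' : Fin (m + l) → ℝ, (∀ i : Fin (m + l), m ≤ (i : ℕ) → 0 ≤ lam' i) →
          d lam' ≤ d lam)) :
    DualSol.Nonempty ∧
    (∀ lam : Fin (m + l) → ℝ, lam ∈ DualSol ↔
      (∀ z : Fin (m + l) → ℝ, V 0 + ((∑ i, lam i * z i : ℝ) : EReal) ≤ V z)) ∧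
    (∀ lam ∈ DualSol, ∑ i, |lam i| ≤ 2 * M / ε) :=
  dual_solutions_nonempty_eq_subdiff_bounded_general m l Pc hconv ξ ζ hξ hζ M hM ε hε hqual V hV d
    hd DualSol hDualSol
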